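/- Let 1 < p < ∞ and let (Ω,μ) be a finite measure space. Suppose F_ε, G_ε : Ω → R^n are measurable, uniformly bounded in L^p(Ω;R^n), and ∫_Ω (|F_ε|^{p-2}F_ε − |G_ε|^{p-2}G_ε)·(F_ε − G_ε) dμ → 0 as ε → 0. Then ‖F_ε − G_ε‖_{L^p(Ω)} → 0. -/

import Mathlib

/-!
Write `J x = ‖x‖ ^ (p - 2) • x`. For `p ≥ 2` the pointwise inequality
`‖x - y‖ ^ p ≤ 2 ^ (p - 1) ⟪J x - J y, x - y⟫` integrates directly. For `1 < p ≤ 2` one only has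
`(p - 1) ‖x - y‖ ^ 2 (‖x‖ + ‖y‖) ^ (p - 2) ≤ ⟪J x - J y, x - y⟫`; splitting
`‖x - y‖ ^ p = (‖x - y‖ ^ 2 s ^ (p - 2)) ^ (p / 2) (s ^ p) ^ (1 - p / 2)` with `s = ‖x‖ + ‖y‖`,
Hölder's inequality bounds `∫ ‖F - G‖ ^ p` by `(∫ ⟪J F - J G, F - G⟫ / (p - 1)) ^ (p / 2)` times a
power of `∫ (‖F‖ + ‖G‖) ^ p`, which the uniform `L^p` bounds control.
-/

open MeasureTheory Filter Real
open scoped InnerProductSpace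

namespace Real

lemma add_rpow_le_two_rpow_mul_rpow_add_rpow {a b r : ℝ} (ha : 0 ≤ a) (hb : 0 ≤ b)
    (hr : 0 ≤ r) : (a + b) ^ r ≤ 2 ^ r * (a ^ r + b ^ r) := calc
  (a + b) ^ r ≤ (2 * max a b) ^ r := by rw [two_mul]; gcongr <;> simp
  _ = 2 ^ r * max a b ^ r := mul_rpow zero_le_two (le_max_of_le_left ha)
  _ ≤ 2 ^ r * (a ^ r + b ^ r) := by
    gcongr
    rcases le_total a b with h | h
    · rw [max_eq_right h]; linarith [rpow_nonneg ha r]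
    · rw [max_eq_left h]; linarith [rpow_nonneg hb r]

lemma mul_rpow_sub_one_mul_sub_le_rpow_sub_rpow {a b q : ℝ} (hb : 0 ≤ b) (hba : b ≤ a)
    (hq0 : 0 ≤ q) (hq1 : q ≤ 1) : q * a ^ (q - 1) * (a - b) ≤ a ^ q - b ^ q := by
  rcases (hb.trans hba).eq_or_lt with rfl | ha
  · obtain rfl : b = 0 := le_antisymm hba hb
    simp
  -- Bernoulli's inequality `(1 + s) ^ q ≤ 1 + q s` at `s = b / a - 1`, multiplied by `a ^ q`.
  have hbern := rpow_one_add_le_one_add_mul_self (s := b / a - 1)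
    (by linarith [div_nonneg hb ha.le]) hq0 hq1
  rw [add_sub_cancel, div_rpow hb ha.le, div_le_iff₀ (rpow_pos_of_pos ha q)] at hbern
  have haq : a ^ q = a ^ (q - 1) * a := by rw [← rpow_add_one ha.ne', sub_add_cancel]
  have : a ^ q * (b / a - 1) = a ^ (q - 1) * (b - a) := by
    rw [haq]; field_simp
  nlinarith

lemma mul_sq_mul_add_rpow_le {a b p : ℝ} (ha : 0 ≤ a) (hb : 0 ≤ b) (hp1 : 1 ≤ p)
    (hp2 : p ≤ 2) :
    (p - 1) * (a - b) ^ 2 * (a + b) ^ (p - 2) ≤ (a - b) * (a ^ (p - 1) - b ^ (p - 1)) := by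
  wlog hba : b ≤ a generalizing a b
  · have := this hb ha (le_of_not_ge hba)
    rw [add_comm b a] at this
    linarith [show (b - a) ^ 2 = (a - b) ^ 2 by ring,
      show (b - a) * (b ^ (p - 1) - a ^ (p - 1)) = (a - b) * (a ^ (p - 1) - b ^ (p - 1)) by ring]
  rcases ha.eq_or_lt with rfl | ha
  · obtain rfl : b = 0 := le_antisymm hba hb
    simp
  have hX : (a + b) ^ (p - 2) ≤ a ^ (p - 2) :=
    rpow_le_rpow_of_nonpos ha (le_add_of_nonneg_right hb) (by linarith)
  have hbern := mul_rpow_sub_one_mul_sub_le_rpow_sub_rpow hb hba (by linarith : 0 ≤ p - 1)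
    (by linarith)
  rw [show p - 1 - 1 = p - 2 by ring] at hbern
  calc (p - 1) * (a - b) ^ 2 * (a + b) ^ (p - 2)
      = (a - b) * ((p - 1) * (a + b) ^ (p - 2) * (a - b)) := by ring
    _ ≤ (a - b) * ((p - 1) * a ^ (p - 2) * (a - b)) := by gcongr
    _ ≤ (a - b) * (a ^ (p - 1) - b ^ (p - 1)) := by gcongr

end Real

section DualityMap

variable {E : Type*} [NormedAddCommGroup E] [InnerProductSpace ℝ E]

/-- The gradient of `‖x‖ ^ p / p`. -/
noncomputable def dualityMap (p : ℝ) (x : E) : E := ‖x‖ ^ (p - 2) • x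

/-- For `p ≥ 1` both summands are nonnegative: the first by monotonicity of `t ↦ t ^ (p - 1)`, the
second by Cauchy–Schwarz. -/
lemma inner_dualityMap_sub_dualityMap (p : ℝ) (x y : E) :
    ⟪dualityMap p x - dualityMap p y, x - y⟫_ℝ =
      (‖x‖ - ‖y‖) * (‖x‖ ^ (p - 2) * ‖x‖ - ‖y‖ ^ (p - 2) * ‖y‖) +
        (‖x‖ ^ (p - 2) + ‖y‖ ^ (p - 2)) * (‖x‖ * ‖y‖ - ⟪x, y⟫_ℝ) := by
  simp only [dualityMap, inner_sub_left, inner_sub_right, real_inner_smul_left,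
    real_inner_self_eq_norm_mul_norm, real_inner_comm x y]
  ring

lemma norm_sub_sq_eq_norm_sub_norm_sq_add (x y : E) :
    ‖x - y‖ ^ 2 = (‖x‖ - ‖y‖) ^ 2 + 2 * (‖x‖ * ‖y‖ - ⟪x, y⟫_ℝ) := by
  rw [norm_sub_sq_real]; ring

lemma half_mul_norm_sub_sq_le_inner_dualityMap {p : ℝ} (hp : 2 ≤ p) (x y : E) :
    (‖x‖ ^ (p - 2) + ‖y‖ ^ (p - 2)) / 2 * ‖x - y‖ ^ 2 ≤
      ⟪dualityMap p x - dualityMap p y, x - y⟫_ℝ := by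
  have hmono : 0 ≤ (‖x‖ - ‖y‖) * (‖x‖ ^ (p - 2) - ‖y‖ ^ (p - 2)) := by
    rcases le_total ‖x‖ ‖y‖ with h | h
    · exact mul_nonneg_of_nonpos_of_nonpos (by linarith)
        (by linarith [rpow_le_rpow (norm_nonneg x) h (by linarith : 0 ≤ p - 2)])
    · exact mul_nonneg (by linarith)
        (by linarith [rpow_le_rpow (norm_nonneg y) h (by linarith : 0 ≤ p - 2)])
  rw [inner_dualityMap_sub_dualityMap, norm_sub_sq_eq_norm_sub_norm_sq_add]
  nlinarith [mul_nonneg hmono (add_nonneg (norm_nonneg x) (norm_nonneg y))]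

lemma norm_sub_rpow_le_two_rpow_mul_inner_dualityMap {p : ℝ} (hp : 2 ≤ p) (x y : E) :
    ‖x - y‖ ^ p ≤ 2 ^ (p - 1) * ⟪dualityMap p x - dualityMap p y, x - y⟫_ℝ := by
  have hsq : ‖x - y‖ ^ p = ‖x - y‖ ^ (p - 2) * ‖x - y‖ ^ 2 := by
    rw [← rpow_natCast, ← rpow_add' (norm_nonneg _) (by norm_num; linarith)]; norm_num
  have hpow : ‖x - y‖ ^ (p - 2) ≤ 2 ^ (p - 2) * (‖x‖ ^ (p - 2) + ‖y‖ ^ (p - 2)) :=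
    (rpow_le_rpow (norm_nonneg _) (norm_sub_le x y) (by linarith)).trans
      (add_rpow_le_two_rpow_mul_rpow_add_rpow (norm_nonneg x) (norm_nonneg y) (by linarith))
  have h2 : (2 : ℝ) ^ (p - 1) = 2 ^ (p - 2) * 2 := by
    rw [← rpow_add_one two_ne_zero]; ring_nf
  calc ‖x - y‖ ^ p ≤ 2 ^ (p - 2) * (‖x‖ ^ (p - 2) + ‖y‖ ^ (p - 2)) * ‖x - y‖ ^ 2 := by
        rw [hsq]; gcongr
    _ = 2 ^ (p - 1) * ((‖x‖ ^ (p - 2) + ‖y‖ ^ (p - 2)) / 2 * ‖x - y‖ ^ 2) := by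
        rw [h2]; ring
    _ ≤ 2 ^ (p - 1) * ⟪dualityMap p x - dualityMap p y, x - y⟫_ℝ := by
        gcongr; exact half_mul_norm_sub_sq_le_inner_dualityMap hp x y

lemma mul_norm_sub_sq_mul_rpow_le_inner_dualityMap {p : ℝ} (hp1 : 1 < p) (hp2 : p ≤ 2)
    (x y : E) :
    (p - 1) * ‖x - y‖ ^ 2 * (‖x‖ + ‖y‖) ^ (p - 2) ≤
      ⟪dualityMap p x - dualityMap p y, x - y⟫_ℝ := by
  set X := (‖x‖ + ‖y‖) ^ (p - 2)
  have hself : ∀ a : ℝ, 0 ≤ a → a ^ (p - 2) * a = a ^ (p - 1) := fun a ha => by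
    rw [← rpow_add_one' ha (by linarith)]; ring_nf
  have hcs : 0 ≤ ‖x‖ * ‖y‖ - ⟪x, y⟫_ℝ := sub_nonneg.2 (real_inner_le_norm x y)
  -- Away from `x = 0` and `y = 0` we have `X ≤ ‖x‖ ^ (p - 2), ‖y‖ ^ (p - 2)`; at those points
  -- the Cauchy–Schwarz defect vanishes instead.
  have hcross : 2 * (p - 1) * X * (‖x‖ * ‖y‖ - ⟪x, y⟫_ℝ) ≤
      (‖x‖ ^ (p - 2) + ‖y‖ ^ (p - 2)) * (‖x‖ * ‖y‖ - ⟪x, y⟫_ℝ) := by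
    rcases eq_or_ne x 0 with rfl | hx
    · simp
    rcases eq_or_ne y 0 with rfl | hy
    · simp
    have hX0 : 0 ≤ X := by positivity
    have hXx : X ≤ ‖x‖ ^ (p - 2) := rpow_le_rpow_of_nonpos (norm_pos_iff.2 hx)
      (le_add_of_nonneg_right (norm_nonneg y)) (by linarith)
    have hXy : X ≤ ‖y‖ ^ (p - 2) := rpow_le_rpow_of_nonpos (norm_pos_iff.2 hy)
      (le_add_of_nonneg_left (norm_nonneg x)) (by linarith)
    gcongr
    nlinarith
  have hscalar := mul_sq_mul_add_rpow_le (norm_nonneg x) (norm_nonneg y) hp1.le hp2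
  rw [inner_dualityMap_sub_dualityMap, norm_sub_sq_eq_norm_sub_norm_sq_add, hself _ (norm_nonneg x),
    hself _ (norm_nonneg y)]
  nlinarith

lemma inner_dualityMap_sub_dualityMap_nonneg {p : ℝ} (hp : 1 < p) (x y : E) :
    0 ≤ ⟪dualityMap p x - dualityMap p y, x - y⟫_ℝ := by
  rcases le_total 2 p with hp2 | hp2
  · refine le_trans ?_ (half_mul_norm_sub_sq_le_inner_dualityMap hp2 x y)
    positivity
  · refine le_trans ?_ (mul_norm_sub_sq_mul_rpow_le_inner_dualityMap hp hp2 x y)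
    have : 0 ≤ p - 1 := by linarith
    positivity

lemma norm_sub_rpow_le_inner_dualityMap_rpow_mul {p : ℝ} (hp1 : 1 < p) (hp2 : p ≤ 2)
    (x y : E) :
    ‖x - y‖ ^ p ≤ ((p - 1)⁻¹ * ⟪dualityMap p x - dualityMap p y, x - y⟫_ℝ) ^ (p / 2) *
      ((‖x‖ + ‖y‖) ^ p) ^ (1 - p / 2) := by
  have hmono := mul_norm_sub_sq_mul_rpow_le_inner_dualityMap hp1 hp2 x y
  have hs0 : 0 ≤ ‖x‖ + ‖y‖ := by positivity
  have hI0 : 0 ≤ (p - 1)⁻¹ * ⟪dualityMap p x - dualityMap p y, x - y⟫_ℝ :=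
    mul_nonneg (inv_nonneg.2 (by linarith)) (inner_dualityMap_sub_dualityMap_nonneg hp1 x y)
  rcases hs0.eq_or_lt with hs | hs
  · have hd : ‖x - y‖ = 0 := le_antisymm (hs ▸ norm_sub_le x y) (norm_nonneg _)
    rw [hd, zero_rpow (by linarith)]
    exact mul_nonneg (rpow_nonneg hI0 _) (by positivity)
  have hsplit : ‖x - y‖ ^ p = (‖x - y‖ ^ 2 * (‖x‖ + ‖y‖) ^ (p - 2)) ^ (p / 2) *
      ((‖x‖ + ‖y‖) ^ p) ^ (1 - p / 2) := by
    rw [mul_rpow (by positivity) (by positivity), ← rpow_natCast, ← rpow_mul (norm_nonneg _),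
      ← rpow_mul hs0, ← rpow_mul hs0, mul_assoc, ← rpow_add hs]
    ring_nf
    simp
  rw [hsplit]
  gcongr ?_ ^ _ * _
  rw [le_inv_mul_iff₀ (by linarith)]
  linarith

end DualityMap

lemma lintegral_add_norm_rpow_le {α E : Type*} [MeasurableSpace α] {μ : Measure α}
    [NormedAddCommGroup E] [MeasurableSpace E] [OpensMeasurableSpace E] {p : ℝ} (hp : 0 ≤ p)
    {f : α → E} (hf : Measurable f) (g : α → E) :
    ∫⁻ x, ENNReal.ofReal ((‖f x‖ + ‖g x‖) ^ p) ∂μ ≤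
      ENNReal.ofReal (2 ^ p) * (∫⁻ x, ENNReal.ofReal (‖f x‖ ^ p) ∂μ +
        ∫⁻ x, ENNReal.ofReal (‖g x‖ ^ p) ∂μ) := by
  rw [← lintegral_add_left (by fun_prop), ← lintegral_const_mul' _ _ ENNReal.ofReal_ne_top]
  refine lintegral_mono fun x => ?_
  rw [← ENNReal.ofReal_add (by positivity) (by positivity), ← ENNReal.ofReal_mul (by positivity)]
  exact ENNReal.ofReal_le_ofReal
    (add_rpow_le_two_rpow_mul_rpow_add_rpow (norm_nonneg _) (norm_nonneg _) hp)

section Integral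

variable {α E : Type*} [MeasurableSpace α] {μ : Measure α}
  [NormedAddCommGroup E] [InnerProductSpace ℝ E]

lemma lintegral_norm_sub_rpow_le_of_two_le {p : ℝ} (hp : 2 ≤ p) (f g : α → E) :
    ∫⁻ x, ENNReal.ofReal (‖f x - g x‖ ^ p) ∂μ ≤
      ENNReal.ofReal (2 ^ (p - 1)) *
        ∫⁻ x, ENNReal.ofReal ⟪dualityMap p (f x) - dualityMap p (g x), f x - g x⟫_ℝ ∂μ := by
  rw [← lintegral_const_mul' _ _ ENNReal.ofReal_ne_top]
  refine lintegral_mono fun x => ?_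
  rw [← ENNReal.ofReal_mul (by positivity)]
  exact ENNReal.ofReal_le_ofReal (norm_sub_rpow_le_two_rpow_mul_inner_dualityMap hp _ _)

lemma lintegral_norm_sub_rpow_le_of_le_two [MeasurableSpace E] [BorelSpace E]
    [SecondCountableTopology E] {p : ℝ} (hp1 : 1 < p) (hp2 : p ≤ 2) {f g : α → E}
    (hf : Measurable f) (hg : Measurable g) :
    ∫⁻ x, ENNReal.ofReal (‖f x - g x‖ ^ p) ∂μ ≤
      (ENNReal.ofReal (p - 1)⁻¹ *
        ∫⁻ x, ENNReal.ofReal ⟪dualityMap p (f x) - dualityMap p (g x), f x - g x⟫_ℝ ∂μ)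
          ^ (p / 2) *
      (∫⁻ x, ENNReal.ofReal ((‖f x‖ + ‖g x‖) ^ p) ∂μ) ^ (1 - p / 2) := by
  have hmeas : Measurable fun x => ENNReal.ofReal
      ((p - 1)⁻¹ * ⟪dualityMap p (f x) - dualityMap p (g x), f x - g x⟫_ℝ) := by
    unfold dualityMap; fun_prop
  calc ∫⁻ x, ENNReal.ofReal (‖f x - g x‖ ^ p) ∂μ
      ≤ ∫⁻ x, ENNReal.ofReal ((p - 1)⁻¹ *
            ⟪dualityMap p (f x) - dualityMap p (g x), f x - g x⟫_ℝ) ^ (p / 2) *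
          ENNReal.ofReal ((‖f x‖ + ‖g x‖) ^ p) ^ (1 - p / 2) ∂μ := by
        refine lintegral_mono fun x => ?_
        have hI0 := inner_dualityMap_sub_dualityMap_nonneg hp1 (f x) (g x)
        rw [ENNReal.ofReal_rpow_of_nonneg (by positivity) (by positivity),
          ENNReal.ofReal_rpow_of_nonneg (by positivity) (by linarith),
          ← ENNReal.ofReal_mul (by positivity)]
        exact ENNReal.ofReal_le_ofReal (norm_sub_rpow_le_inner_dualityMap_rpow_mul hp1 hp2 _ _)
    _ ≤ (∫⁻ x, ENNReal.ofReal ((p - 1)⁻¹ *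
            ⟪dualityMap p (f x) - dualityMap p (g x), f x - g x⟫_ℝ) ∂μ) ^ (p / 2) *
          (∫⁻ x, ENNReal.ofReal ((‖f x‖ + ‖g x‖) ^ p) ∂μ) ^ (1 - p / 2) :=
        ENNReal.lintegral_mul_norm_pow_le hmeas.aemeasurable (by fun_prop) (by linarith)
          (by linarith) (by ring)
    _ = _ := by
        rw [← lintegral_const_mul' _ _ ENNReal.ofReal_ne_top]
        simp_rw [ENNReal.ofReal_mul (inv_nonneg.2 (by linarith : 0 ≤ p - 1))]

end Integral

theorem monotonicity_implies_strong_convergence_general (α : Type*) [MeasurableSpace α]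
    (μ : Measure α) (n : ℕ) (p C : ℝ) (hp : 1 < p)
    (F G : ℕ → α → EuclideanSpace ℝ (Fin n))
    (hF : ∀ k, Measurable (F k)) (hG : ∀ k, Measurable (G k))
    (hFbd : ∀ k, (∫⁻ x, ENNReal.ofReal (‖F k x‖ ^ p) ∂μ) ≤ ENNReal.ofReal C)
    (hGbd : ∀ k, (∫⁻ x, ENNReal.ofReal (‖G k x‖ ^ p) ∂μ) ≤ ENNReal.ofReal C)
    (hmono : Tendsto
      (fun k => ∫⁻ x, ENNReal.ofReal
        (inner ℝ (‖F k x‖ ^ (p - 2) • F k x - ‖G k x‖ ^ (p - 2) • G k x)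
          (F k x - G k x) : ℝ) ∂μ) atTop (nhds 0)) :
    Tendsto (fun k => ∫⁻ x, ENNReal.ofReal (‖F k x - G k x‖ ^ p) ∂μ)
      atTop (nhds 0) := by
  rcases le_total 2 p with hp2 | hp2
  · have hlim := ENNReal.Tendsto.const_mul hmono
      (Or.inr (ENNReal.ofReal_ne_top (r := 2 ^ (p - 1))))
    rw [mul_zero] at hlim
    exact tendsto_of_tendsto_of_tendsto_of_le_of_le tendsto_const_nhds hlim (fun _ => zero_le)
      fun k => lintegral_norm_sub_rpow_le_of_two_le hp2 (F k) (G k)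
  · obtain ⟨D, hD_ne_top, hD⟩ : ∃ D ≠ ⊤,
        ∀ k, ∫⁻ x, ENNReal.ofReal ((‖F k x‖ + ‖G k x‖) ^ p) ∂μ ≤ D :=
      ⟨ENNReal.ofReal (2 ^ p) * (ENNReal.ofReal C + ENNReal.ofReal C), by finiteness,
        fun k => (lintegral_add_norm_rpow_le (by linarith) (hF k) (G k)).trans
          (by gcongr; exacts [hFbd k, hGbd k])⟩
    have hlim := ENNReal.Tendsto.mul_const
      ((ENNReal.Tendsto.const_mul hmono
        (Or.inr (ENNReal.ofReal_ne_top (r := (p - 1)⁻¹)))).ennrpow_const (p / 2))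
      (Or.inr (ENNReal.rpow_ne_top_of_nonneg (y := 1 - p / 2) (by linarith) hD_ne_top))
    rw [mul_zero, ENNReal.zero_rpow_of_pos (by linarith), zero_mul] at hlim
    exact tendsto_of_tendsto_of_tendsto_of_le_of_le tendsto_const_nhds hlim (fun _ => zero_le)
      fun k => (lintegral_norm_sub_rpow_le_of_le_two hp hp2 (hF k) (hG k)).trans
        (mul_le_mul_right (ENNReal.rpow_le_rpow (hD k) (by linarith)) _)

/-- If `(F_ε)`, `(G_ε)` are uniformly bounded in `L^p(Ω; ℝⁿ)` and
`∫ (|F_ε|^{p-2}F_ε − |G_ε|^{p-2}G_ε)·(F_ε − G_ε) dμ → 0`, then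
`‖F_ε − G_ε‖_{L^p} → 0`. -/
theorem monotonicity_implies_strong_convergence (α : Type*) [MeasurableSpace α]
    (μ : Measure α) [IsFiniteMeasure μ] (n : ℕ) (p C : ℝ) (hp : 1 < p) (hC : 0 < C)
    (F G : ℕ → α → EuclideanSpace ℝ (Fin n))
    (hF : ∀ k, Measurable (F k)) (hG : ∀ k, Measurable (G k))
    (hFbd : ∀ k, (∫⁻ x, ENNReal.ofReal (‖F k x‖ ^ p) ∂μ) ≤ ENNReal.ofReal C)
    (hGbd : ∀ k, (∫⁻ x, ENNReal.ofReal (‖G k x‖ ^ p) ∂μ) ≤ ENNReal.ofReal C)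
    (hmono : Tendsto
      (fun k => ∫⁻ x, ENNReal.ofReal
        (inner ℝ (‖F k x‖ ^ (p - 2) • F k x - ‖G k x‖ ^ (p - 2) • G k x)
          (F k x - G k x) : ℝ) ∂μ) atTop (nhds 0)) :
    Tendsto (fun k => ∫⁻ x, ENNReal.ofReal (‖F k x - G k x‖ ^ p) ∂μ)
      atTop (nhds 0) :=
  monotonicity_implies_strong_convergence_general α μ n p C hp F G hF hG hFbd hGbd hmono
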